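/- arXiv:1812.05748 — 5 statements merged into one kernel-verified Lean document; each statement's English description precedes it below -/
import Mathlib

section
/- For constants b > 0, β ∈ (0,1) and θ ∈ (0,1], the function ψ(t) = (b + β t^{1/θ})^θ defined for t ≥ 0 is monotone increasing and convex. -/
/-- For constants `b > 0`, `β ∈ (0,1)` and `θ ∈ (0,1]`, the function
`ψ(t) = (b + β t^(1/θ))^θ` defined for `t ≥ 0` is monotone increasing and convex. -/
theorem stmt_0 (b β θ : ℝ) (hb : 0 < b) (hβ0 : 0 < β) (hβ1 : β < 1)
    (hθ0 : 0 < θ) (hθ1 : θ ≤ 1) :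
    (∀ s t : ℝ, 0 ≤ s → s ≤ t →
      (b + β * s ^ (1/θ)) ^ θ ≤ (b + β * t ^ (1/θ)) ^ θ) ∧
    (∀ s t l : ℝ, 0 ≤ s → 0 ≤ t → 0 ≤ l → l ≤ 1 →
      (b + β * (l * s + (1 - l) * t) ^ (1/θ)) ^ θ ≤
        l * (b + β * s ^ (1/θ)) ^ θ + (1 - l) * (b + β * t ^ (1/θ)) ^ θ) := by
  have hp1 : (1:ℝ) ≤ 1/θ := by
    rw [le_div_iff₀ hθ0]; linarith
  have hp0 : (0:ℝ) < 1/θ := by positivity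
  have hθp : θ * (1/θ) = 1 := by field_simp
  have hpθ : (1/θ) * θ = 1 := by field_simp
  constructor
  · intro s t hs hst
    have h1 : s ^ (1/θ) ≤ t ^ (1/θ) := Real.rpow_le_rpow hs hst hp0.le
    have h2 : b + β * s ^ (1/θ) ≤ b + β * t ^ (1/θ) := by nlinarith
    exact Real.rpow_le_rpow (by positivity) h2 hθ0.le
  · intro s t l hs ht hl0 hl1
    have key : ∀ c u : ℝ, 0 ≤ c → 0 ≤ u →
        (|c * b ^ θ| ^ (1/θ) + |c * β ^ θ * u| ^ (1/θ)) ^ θ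
          = c * (b + β * u ^ (1/θ)) ^ θ := by
      intro c u hc hu
      have e1 : |c * b ^ θ| ^ (1/θ) = c ^ (1/θ) * b := by
        rw [abs_of_nonneg (by positivity), Real.mul_rpow hc (by positivity),
          ← Real.rpow_mul hb.le, hθp, Real.rpow_one]
      have e2 : |c * β ^ θ * u| ^ (1/θ) = c ^ (1/θ) * (β * u ^ (1/θ)) := by
        rw [abs_of_nonneg (by positivity), Real.mul_rpow (by positivity) hu,
          Real.mul_rpow hc (by positivity), ← Real.rpow_mul hβ0.le, hθp, Real.rpow_one,
          mul_assoc]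
      rw [e1, e2, ← mul_add, Real.mul_rpow (by positivity) (by positivity),
        ← Real.rpow_mul hc, hpθ, Real.rpow_one]
    have minkow := Real.Lp_add_le (Finset.univ : Finset (Fin 2))
      ![l * b ^ θ, l * β ^ θ * s] ![(1-l) * b ^ θ, (1-l) * β ^ θ * t] hp1
    simp only [Fin.sum_univ_two, Matrix.cons_val_zero, Matrix.cons_val_one, Matrix.head_cons,
      Pi.add_apply] at minkow
    have hl1' : (0:ℝ) ≤ 1 - l := by linarith
    have eL : |l * b ^ θ + (1-l) * b ^ θ| ^ (1/θ) + |l * β ^ θ * s + (1-l) * β ^ θ * t| ^ (1/θ)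
        = b + β * (l * s + (1 - l) * t) ^ (1/θ) := by
      have h1 : l * b ^ θ + (1-l) * b ^ θ = b ^ θ := by ring
      have h2 : l * β ^ θ * s + (1-l) * β ^ θ * t = β ^ θ * (l * s + (1-l) * t) := by ring
      have hu : 0 ≤ l * s + (1-l) * t := by positivity
      rw [h1, h2, abs_of_nonneg (by positivity), abs_of_nonneg (by positivity),
        ← Real.rpow_mul hb.le, hθp, Real.rpow_one,
        Real.mul_rpow (by positivity) hu, ← Real.rpow_mul hβ0.le, hθp, Real.rpow_one]
    -- rewrite minkow
    have keyL := key l s hl0 hs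
    have keyR := key (1-l) t hl1' ht
    simp only [one_div_one_div] at minkow
    rw [eL, keyL, keyR] at minkow
    exact minkow
end

section
/- Let β ∈ (0,1), ρ ∈ (0,1), M > 0, L ≥ 0 and define φ(d) = ((d^{1−ρ} − M)/β)^{1/(1−ρ)} − d − L for d > d̲ where d̲ = (M/(1−β^{1/ρ}))^{1/(1−ρ)}. Then there exists d* > d̲ with φ(d*) > 0; in particular φ(d) → ∞ as d → ∞. -/
/-- Existence of a strict lower solution for the narrow-framing model, case
`ρ < 1 < γ`: `φ(d) = ((d^(1−ρ) − M)/β)^(1/(1−ρ)) − d − L` exceeds `0` somewhere above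
`d̲ = (M/(1−β^(1/ρ)))^(1/(1−ρ))`, and `φ(d) → ∞` as `d → ∞`. -/
theorem stmt_12 (β ρ M L : ℝ) (hβ0 : 0 < β) (hβ1 : β < 1)
    (hρ0 : 0 < ρ) (hρ1 : ρ < 1) (hM : 0 < M) (hL : 0 ≤ L) :
    (∃ d : ℝ, (M / (1 - β ^ (1/ρ))) ^ (1/(1-ρ)) < d ∧
      0 < ((d ^ (1-ρ) - M) / β) ^ (1/(1-ρ)) - d - L) ∧
    Filter.Tendsto (fun d : ℝ => ((d ^ (1-ρ) - M) / β) ^ (1/(1-ρ)) - d - L)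
      Filter.atTop Filter.atTop := by
  have hσ : (0:ℝ) < 1 - ρ := by linarith
  set σ := 1 - ρ with hσdef
  have hσinv : 0 < 1 / σ := by positivity
  set θ : ℝ := (1 + β) / 2 with hθdef
  have hθ0 : 0 < θ := by positivity
  have hθβ : β < θ := by rw [hθdef]; linarith
  have hθ1 : θ < 1 := by rw [hθdef]; linarith
  set c : ℝ := (θ / β) ^ (1 / σ) with hcdef
  have hθβ1 : 1 < θ / β := (one_lt_div hβ0).2 hθβ
  have hc : 1 < c := by
    rw [hcdef]
    exact Real.one_lt_rpow_iff_of_pos (by positivity) |>.2 (Or.inl ⟨hθβ1, hσinv⟩)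
  -- eventual lower bound
  have key : ∀ᶠ d : ℝ in Filter.atTop,
      (c - 1) * d - L ≤ ((d ^ σ - M) / β) ^ (1 / σ) - d - L := by
    filter_upwards [Filter.eventually_ge_atTop (1:ℝ),
      Filter.eventually_ge_atTop ((M / (1 - θ)) ^ (1 / σ))] with d hd1 hd2
    have hd0 : (0:ℝ) ≤ d := le_trans zero_le_one hd1
    have h1θ : (0:ℝ) < 1 - θ := by linarith
    have hMθ : (0:ℝ) ≤ M / (1 - θ) := by positivity
    have hdσ : M / (1 - θ) ≤ d ^ σ := by
      have := Real.rpow_le_rpow (by positivity) hd2 (le_of_lt hσ)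
      rwa [← Real.rpow_mul hMθ, one_div,
        inv_mul_cancel₀ (ne_of_gt hσ), Real.rpow_one] at this
    have hdσM : θ * d ^ σ ≤ d ^ σ - M := by
      have : M ≤ (1 - θ) * d ^ σ := by
        rw [div_le_iff₀ h1θ] at hdσ; linarith [hdσ]
      nlinarith
    have hmain : (θ / β) * d ^ σ ≤ (d ^ σ - M) / β := by
      rw [div_mul_eq_mul_div, div_le_div_iff₀ hβ0 hβ0]
      nlinarith [hdσM, hβ0]
    have hrp : ((θ / β) * d ^ σ) ^ (1 / σ) ≤ ((d ^ σ - M) / β) ^ (1 / σ) :=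
      Real.rpow_le_rpow (by positivity) hmain (le_of_lt hσinv)
    have heq : ((θ / β) * d ^ σ) ^ (1 / σ) = c * d := by
      rw [Real.mul_rpow (by positivity) (by positivity), ← Real.rpow_mul hd0,
        mul_one_div, div_self (ne_of_gt hσ), Real.rpow_one, hcdef]
    rw [heq] at hrp
    nlinarith [hrp]
  have htend : Filter.Tendsto (fun d : ℝ => ((d ^ σ - M) / β) ^ (1 / σ) - d - L)
      Filter.atTop Filter.atTop := by
    apply Filter.tendsto_atTop_mono' _ key
    have h1 : Filter.Tendsto (fun d : ℝ => (c - 1) * d) Filter.atTop Filter.atTop :=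
      Filter.Tendsto.const_mul_atTop (by linarith) Filter.tendsto_id
    exact (Filter.tendsto_atTop_add_const_right _ (-L) h1).congr (fun d => by ring)
  refine ⟨?_, htend⟩
  obtain ⟨d, hd1, hd2⟩ := ((htend.eventually_gt_atTop 0).and
    (Filter.eventually_gt_atTop ((M / (1 - β ^ (1/ρ))) ^ (1/σ)))).exists
  exact ⟨d, hd2, hd1⟩
end

section
/- Let κ : X → ℝ be a function with κ ≥ 1 and let θ > 1. Let L > δ > 0 and d ∈ [0, 1/β^θ) with β ∈ (0,1). Then for every x ∈ X, {L·κ(x) + β(L−δ)·(d·κ(x))^{1/θ}}^θ − (L−δ)^θ·κ(x) ≥ (L^θ − (L−δ)^θ)·κ(x)^θ, and L^θ − (L−δ)^θ > 0. -/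
/-- Strict lower solution bound with weight function `κ^θ` in the
unbounded-rewards extension. -/
theorem stmt_15 {X : Type*} (κ : X → ℝ) (θ β L δ d : ℝ)
    (hκ : ∀ x, 1 ≤ κ x) (hθ : 1 < θ) (hβ0 : 0 < β) (hβ1 : β < 1)
    (hδ0 : 0 < δ) (hδL : δ < L) (hd0 : 0 ≤ d) (hd1 : d < 1 / β ^ θ) :
    (∀ x : X,
      (L^θ - (L - δ)^θ) * κ x ^ θ ≤
        (L * κ x + β * (L - δ) * (d * κ x) ^ (1/θ)) ^ θ - (L - δ)^θ * κ x) ∧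
    0 < L^θ - (L - δ)^θ := by
  have hL : 0 < L := hδ0.trans hδL
  have hLδ : 0 ≤ L - δ := by linarith
  have hθ0 : 0 < θ := by linarith
  constructor
  · intro x
    have hκ0 : 0 ≤ κ x := le_trans zero_le_one (hκ x)
    have ht : 0 ≤ β * (L - δ) * (d * κ x) ^ (1/θ) := by
      apply mul_nonneg (mul_nonneg hβ0.le hLδ)
      exact Real.rpow_nonneg (mul_nonneg hd0 hκ0) _
    have h1 : L ^ θ * κ x ^ θ ≤ (L * κ x + β * (L - δ) * (d * κ x) ^ (1/θ)) ^ θ := by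
      rw [← Real.mul_rpow hL.le hκ0]
      exact Real.rpow_le_rpow (mul_nonneg hL.le hκ0) (le_add_of_nonneg_right ht) hθ0.le
    have h2 : κ x ≤ κ x ^ θ := by
      nth_rewrite 1 [← Real.rpow_one (κ x)]
      exact Real.rpow_le_rpow_of_exponent_le (hκ x) hθ.le
    have h3 : (L - δ) ^ θ * κ x ≤ (L - δ) ^ θ * κ x ^ θ :=
      mul_le_mul_of_nonneg_left h2 (Real.rpow_nonneg hLδ _)
    nlinarith [h1, h3]
  · have : (L - δ) ^ θ < L ^ θ := Real.rpow_lt_rpow hLδ (by linarith) hθ0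
    linarith
end

section
/- Let V be an ordered set of functions and suppose for each σ in a policy set Σ the operator T_σ has a unique fixed point v_σ in V, and T (defined by Tv(x) = sup over feasible σ of T_σ v(x), with suprema attained) has a unique fixed point v̄ in a subset C ⊆ V, with all operators isotone and asymptotically stable. If for v̄ there exists σ with T_σ v̄ = T v̄, then v̄ equals the maximum value function v*(x) = sup_σ v_σ(x). -/
/-- Abstract dynamic programming: if each policy operator `Tσ` is isotone and
asymptotically stable on `V` with fixed point `vσ`, the Bellman operator `T` is
isotone and asymptotically stable on `C ⊆ V` with fixed point `v̄`, `Tσ v ≤ T v`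
on `C`, and a greedy policy for `v̄` exists, then `v̄` equals the maximum value
function `v* = supₛ vσ`. -/
theorem stmt_17 {X S : Type*} (V C : Set (X → ℝ)) (hCV : C ⊆ V)
    (Tp : S → (X → ℝ) → (X → ℝ)) (T : (X → ℝ) → (X → ℝ))
    (vp : S → (X → ℝ)) (vbar : X → ℝ)
    (hTpself : ∀ σ, ∀ v ∈ V, Tp σ v ∈ V)
    (hTpmono : ∀ σ, ∀ v ∈ V, ∀ w ∈ V, (∀ x, v x ≤ w x) → ∀ x, Tp σ v x ≤ Tp σ w x)
    (hvpV : ∀ σ, vp σ ∈ V) (hvpfix : ∀ σ, Tp σ (vp σ) = vp σ)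
    (hvpuniq : ∀ σ, ∀ v ∈ V, Tp σ v = v → v = vp σ)
    (hTpstab : ∀ σ, ∀ v ∈ V, ∀ x,
      Filter.Tendsto (fun n => (Tp σ)^[n] v x) Filter.atTop (nhds (vp σ x)))
    (hTself : ∀ v ∈ C, T v ∈ C)
    (hTmono : ∀ v ∈ C, ∀ w ∈ C, (∀ x, v x ≤ w x) → ∀ x, T v x ≤ T w x)
    (hvbarC : vbar ∈ C) (hvbarfix : T vbar = vbar)
    (hvbaruniq : ∀ v ∈ C, T v = v → v = vbar)
    (hTstab : ∀ v ∈ C, ∀ x,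
      Filter.Tendsto (fun n => T^[n] v x) Filter.atTop (nhds (vbar x)))
    (hdom : ∀ σ, ∀ v ∈ C, ∀ x, Tp σ v x ≤ T v x)
    (hgreedy : ∃ σ, Tp σ vbar = T vbar) :
    ∀ x, vbar x = ⨆ σ, vp σ x := by
  obtain ⟨σ₀, hσ₀⟩ := hgreedy
  have hvbarV : vbar ∈ V := hCV hvbarC
  have hbar0 : vbar = vp σ₀ := hvpuniq σ₀ vbar hvbarV (by rw [hσ₀, hvbarfix])
  -- each vp σ ≤ vbar
  have hle : ∀ σ x, vp σ x ≤ vbar x := by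
    intro σ
    have hiterV : ∀ n, (Tp σ)^[n] vbar ∈ V := by
      intro n; induction n with
      | zero => exact hvbarV
      | succ n ih => rw [Function.iterate_succ_apply']; exact hTpself σ _ ih
    have hiter : ∀ n x, (Tp σ)^[n] vbar x ≤ vbar x := by
      intro n; induction n with
      | zero => intro x; simp
      | succ n ih =>
        intro x
        rw [Function.iterate_succ_apply']
        calc Tp σ ((Tp σ)^[n] vbar) x ≤ Tp σ vbar x :=
              hTpmono σ _ (hiterV n) vbar hvbarV ih x
          _ ≤ T vbar x := hdom σ vbar hvbarC x
          _ = vbar x := by rw [hvbarfix]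
    intro x
    exact le_of_tendsto (hTpstab σ vbar hvbarV x)
      (Filter.Eventually.of_forall fun n => hiter n x)
  have : Nonempty S := ⟨σ₀⟩
  intro x
  refine le_antisymm ?_ (ciSup_le fun σ => hle σ x)
  have hbdd : BddAbove (Set.range fun σ => vp σ x) :=
    ⟨vbar x, by rintro _ ⟨σ, rfl⟩; exact hle σ x⟩
  calc vbar x = vp σ₀ x := by rw [hbar0]
    _ ≤ ⨆ σ, vp σ x := le_ciSup hbdd σ₀
end

section
/- In the abstract setting where each T_σ is asymptotically stable on V with fixed point v_σ and T is asymptotically stable on C with fixed point v* = sup_σ v_σ, a policy σ is optimal (v_σ = v*) if and only if σ is v*-greedy, i.e., T_σ v* = T v*. -/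
/-- Bellman's principle of optimality in the abstract setting: with each `Tσ`
asymptotically stable on `V` with unique fixed point `vσ`, and `T` asymptotically
stable on `C` with fixed point `v* = supₛ vσ`, a policy `σ` is optimal
(`vσ = v*`) if and only if it is `v*`-greedy (`Tσ v* = T v*`). -/
theorem stmt_18 {X S : Type*} (V C : Set (X → ℝ)) (hCV : C ⊆ V)
    (Tp : S → (X → ℝ) → (X → ℝ)) (T : (X → ℝ) → (X → ℝ))
    (vp : S → (X → ℝ)) (vstar : X → ℝ)
    (hTpself : ∀ σ, ∀ v ∈ V, Tp σ v ∈ V)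
    (hvpV : ∀ σ, vp σ ∈ V) (hvpfix : ∀ σ, Tp σ (vp σ) = vp σ)
    (hvpuniq : ∀ σ, ∀ v ∈ V, Tp σ v = v → v = vp σ)
    (hTpstab : ∀ σ, ∀ v ∈ V, ∀ x,
      Filter.Tendsto (fun n => (Tp σ)^[n] v x) Filter.atTop (nhds (vp σ x)))
    (hTsup : ∀ v ∈ C, ∀ x, ∃ σ, Tp σ v x = T v x ∧ ∀ σ', Tp σ' v x ≤ T v x)
    (hvstarC : vstar ∈ C) (hvstarfix : T vstar = vstar)
    (hTstab : ∀ v ∈ C, ∀ x,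
      Filter.Tendsto (fun n => T^[n] v x) Filter.atTop (nhds (vstar x)))
    (hvstarsup : ∀ x, vstar x = ⨆ σ, vp σ x) :
    ∀ σ : S, vp σ = vstar ↔ Tp σ vstar = T vstar := by
  intro σ
  constructor
  · intro h
    rw [← h, hvpfix, h, hvstarfix]
  · intro h
    have hfix : Tp σ vstar = vstar := by rw [h, hvstarfix]
    exact (hvpuniq σ vstar (hCV hvstarC) hfix).symm
end
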